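/- arXiv:2404.15080 — 6 statements merged into one kernel-verified Lean document; each statement's English description precedes it below -/
import Mathlib

section
/- The star product of two generalized Reed–Solomon codes on the same evaluation points satisfies GRS_k(α,ν) ⋆ GRS_ℓ(α,μ) = GRS_{min{k+ℓ-1, n}}(α, ν⋆μ), where the star product of codes is the span of coordinatewise products of codewords. -/
noncomputable def GRS {F : Type*} [Field F] {n : ℕ} (k : ℕ) (α ν : Fin n → F) :
    Submodule F (Fin n → F) :=
  Submodule.map
    ({ toFun := fun f i => ν i * Polynomial.eval (α i) f
       map_add' := by intros; funext i; simp [mul_add]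
       map_smul' := by intros f g; funext i; simp [Polynomial.eval_smul]; ring } :
      Polynomial F →ₗ[F] (Fin n → F))
    (Polynomial.degreeLT F k)

def dualCode {F : Type*} [Field F] {n : ℕ} (C : Submodule F (Fin n → F)) :
    Submodule F (Fin n → F) where
  carrier := {x | ∀ c ∈ C, ∑ i, x i * c i = 0}
  zero_mem' := by intro c hc; simp
  add_mem' := by
    intro a b ha hb c hc
    simp only [Pi.add_apply, add_mul, Finset.sum_add_distrib, ha c hc, hb c hc, add_zero]
  smul_mem' := by
    intro r a ha c hc
    simp only [Pi.smul_apply, smul_eq_mul, mul_assoc, ← Finset.mul_sum, ha c hc, mul_zero]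

def starProd {F : Type*} [Field F] {n : ℕ} (C D : Submodule F (Fin n → F)) :
    Submodule F (Fin n → F) :=
  Submodule.span F {x | ∃ c ∈ C, ∃ d ∈ D, x = fun i => c i * d i}

open Polynomial

open Polynomial in
lemma mem_GRS_iff {F : Type*} [Field F] {n : ℕ} {k : ℕ} {α ν : Fin n → F} {x : Fin n → F} :
    x ∈ GRS k α ν ↔ ∃ f : F[X], f.degree < k ∧ ∀ i, x i = ν i * f.eval (α i) := by
  simp only [GRS, Submodule.mem_map, mem_degreeLT]
  constructor
  · rintro ⟨f, hf, rfl⟩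
    exact ⟨f, hf, fun i => rfl⟩
  · rintro ⟨f, hf, hx⟩
    exact ⟨f, hf, by funext i; exact (hx i).symm⟩

lemma GRS_mono {F : Type*} [Field F] {n : ℕ} {k m : ℕ} (h : k ≤ m) (α ν : Fin n → F) :
    GRS k α ν ≤ GRS m α ν :=
  Submodule.map_mono (fun f hf => mem_degreeLT.2 ((mem_degreeLT.1 hf).trans_le (by exact_mod_cast h)))

lemma GRS_top {F : Type*} [Field F] {n : ℕ} {m : ℕ} (h : n ≤ m) {α : Fin n → F}
    (ν : Fin n → F) (hα : Function.Injective α) (hν : ∀ i, ν i ≠ 0) :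
    GRS m α ν = ⊤ := by
  rw [eq_top_iff]
  intro x _
  rw [mem_GRS_iff]
  refine ⟨Lagrange.interpolate Finset.univ α (fun i => x i / ν i), ?_, ?_⟩
  · refine lt_of_lt_of_le (Lagrange.degree_interpolate_lt _ hα.injOn) ?_
    simpa using (Nat.cast_le (α := WithBot ℕ)).2 h
  · intro i
    rw [Lagrange.eval_interpolate_at_node _ hα.injOn (Finset.mem_univ i)]
    rw [eq_comm, mul_comm, div_mul_cancel₀ _ (hν i)]

lemma pow_mem_GRS {F : Type*} [Field F] {n : ℕ} {k : ℕ} {a : ℕ} (h : a < k)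
    (α ν : Fin n → F) : (fun i => ν i * α i ^ a) ∈ GRS k α ν := by
  rw [mem_GRS_iff]
  exact ⟨X ^ a, by simpa using (Nat.cast_lt (α := WithBot ℕ)).2 h, fun i => by simp⟩

theorem star_GRS {F : Type*} [Field F] {n : ℕ} (k ℓ : ℕ) (hk : 1 ≤ k) (hℓ : 1 ≤ ℓ)
    (α ν μ : Fin n → F) :
    starProd (GRS k α ν) (GRS ℓ α μ) = GRS (k + ℓ - 1) α (fun i => ν i * μ i) := by
  apply le_antisymm
  · rw [starProd, Submodule.span_le]
    rintro x ⟨c, hc, d, hd, rfl⟩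
    rw [SetLike.mem_coe, mem_GRS_iff]
    rw [mem_GRS_iff] at hc hd
    obtain ⟨f, hf, hcf⟩ := hc
    obtain ⟨g, hg, hdg⟩ := hd
    refine ⟨f * g, ?_, fun i => by rw [hcf, hdg]; simp; ring⟩
    rcases eq_or_ne f 0 with rfl | hf0
    · simp only [zero_mul, degree_zero]; exact WithBot.bot_lt_coe _
    rcases eq_or_ne g 0 with rfl | hg0
    · simp only [mul_zero, degree_zero]; exact WithBot.bot_lt_coe _
    rw [degree_mul]
    have h1 : f.natDegree < k := natDegree_lt_iff_degree_lt hf0 |>.2 (by exact_mod_cast hf)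
    have h2 : g.natDegree < ℓ := natDegree_lt_iff_degree_lt hg0 |>.2 (by exact_mod_cast hg)
    rw [degree_eq_natDegree hf0, degree_eq_natDegree hg0]
    exact_mod_cast Nat.cast_lt.2 (by omega : f.natDegree + g.natDegree < k + ℓ - 1)
  · intro x hx
    rw [mem_GRS_iff] at hx
    obtain ⟨f, hf, hxf⟩ := hx
    rcases eq_or_ne f 0 with rfl | hf0
    · have : x = 0 := by funext i; simp [hxf i]
      simp [this]
    have hnd : f.natDegree < k + ℓ - 1 := (natDegree_lt_iff_degree_lt hf0).2 (by exact_mod_cast hf)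
    have hx' : x = ∑ m ∈ Finset.range (k + ℓ - 1),
        f.coeff m • (fun i => (ν i * μ i) * α i ^ m) := by
      funext i
      have := Polynomial.eval_eq_sum_range' hnd (α i)
      simp only [Finset.sum_apply, Pi.smul_apply, smul_eq_mul, hxf i, this, Finset.mul_sum]
      exact Finset.sum_congr rfl (fun m _ => by ring)
    rw [hx']
    refine Submodule.sum_mem _ (fun m hm => Submodule.smul_mem _ _ ?_)
    rw [Finset.mem_range] at hm
    set a := min m (k - 1) with ha
    have hak : a < k := by omega
    have hbl : m - a < ℓ := by omega
    apply Submodule.subset_span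
    refine ⟨_, pow_mem_GRS hak α ν, _, pow_mem_GRS hbl α μ, ?_⟩
    funext i
    have hab : α i ^ m = α i ^ a * α i ^ (m - a) := by
      rw [← pow_add]; congr 1; omega
    rw [hab]; ring

/-- The star product of two generalized Reed–Solomon codes on the same
evaluation points satisfies
`GRS_k(α,ν) ⋆ GRS_ℓ(α,μ) = GRS_{min{k+ℓ-1, n}}(α, ν⋆μ)`. -/
theorem stmt4 {F : Type*} [Field F] {n : ℕ} (k ℓ : ℕ) (hk : 1 ≤ k) (hℓ : 1 ≤ ℓ)
    (α ν μ : Fin n → F) (hα : Function.Injective α)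
    (hν : ∀ i, ν i ≠ 0) (hμ : ∀ i, μ i ≠ 0) :
    starProd (GRS k α ν) (GRS ℓ α μ) =
      GRS (min (k + ℓ - 1) n) α (fun i => ν i * μ i) := by
  rw [star_GRS k ℓ hk hℓ α ν μ]
  rcases le_or_gt (k + ℓ - 1) n with h | h
  · rw [min_eq_left h]
  · have hνμ : ∀ i, ν i * μ i ≠ 0 := fun i => mul_ne_zero (hν i) (hμ i)
    rw [min_eq_right h.le, GRS_top (le_of_lt h) _ hα hνμ, GRS_top le_rfl _ hα hνμ]
end

section
/- If C is a linear [n,k] MDS code over 𝔽_q with k ≥ q+1, then n ≤ k+1. -/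
open Finset

/-- If a vector vanishes on a set `S`, its Hamming norm plus `#S` is at most `n`. -/
lemma norm_add_card_le {F : Type*} [DecidableEq F] [Zero F] {n : ℕ}
    (c : Fin n → F) (S : Finset (Fin n)) (hS : ∀ i ∈ S, c i = 0) :
    hammingNorm c + S.card ≤ n := by
  have hdisj : Disjoint ({i | c i ≠ 0} : Finset (Fin n)) S := by
    rw [Finset.disjoint_left]
    intro i hi hiS
    simp only [mem_filter] at hi
    exact hi.2 (hS i hiS)
  calc hammingNorm c + S.card = (({i | c i ≠ 0} : Finset (Fin n)) ∪ S).card := by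
        rw [Finset.card_union_of_disjoint hdisj]; rfl
    _ ≤ Fintype.card (Fin n) := Finset.card_le_univ _
    _ = n := Fintype.card_fin n

/-- If `C` is a linear `[n, k]` MDS code over `𝔽_q` with `k ≥ q + 1`,
then `n ≤ k + 1`. -/
theorem stmt6 {F : Type*} [Field F] [Fintype F] [DecidableEq F] {n k : ℕ}
    (C : Submodule F (Fin n → F)) (hdim : Module.finrank F C = k)
    (hlb : ∀ c ∈ C, c ≠ 0 → n - k + 1 ≤ hammingNorm c)
    (hub : ∃ c ∈ C, c ≠ 0 ∧ hammingNorm c = n - k + 1)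
    (hk : Fintype.card F + 1 ≤ k) :
    n ≤ k + 1 := by
  by_contra hcon
  have hkn2 : k + 2 ≤ n := by omega
  have hkn : k ≤ n := by omega
  have hq2 : 2 ≤ Fintype.card F := Fintype.one_lt_card
  have hk3 : 3 ≤ k := by omega
  -- the projection onto the first k coordinates
  let φ : C →ₗ[F] (Fin k → F) :=
    (LinearMap.funLeft F F (Fin.castLE hkn)).comp C.subtype
  have hφinj : Function.Injective φ := by
    rw [← LinearMap.ker_eq_bot, LinearMap.ker_eq_bot']
    intro c hc
    by_contra hc0
    have hcC : (c : Fin n → F) ∈ C := c.2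
    have hcne : (c : Fin n → F) ≠ 0 := by
      simpa [Submodule.coe_eq_zero] using hc0
    have hzero : ∀ i ∈ (Finset.univ.image (Fin.castLE hkn)), (c : Fin n → F) i = 0 := by
      intro i hi
      simp only [mem_image, mem_univ, true_and] at hi
      obtain ⟨j, rfl⟩ := hi
      have := congrFun hc j
      simpa [φ, LinearMap.funLeft] using this
    have hcard : (Finset.univ.image (Fin.castLE hkn)).card = k := by
      rw [Finset.card_image_of_injective _ (Fin.castLE_injective hkn)]
      simp
    have h1 := norm_add_card_le (c : Fin n → F) _ hzero
    rw [hcard] at h1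
    have h2 := hlb _ hcC hcne
    omega
  have : FiniteDimensional F C := FiniteDimensional.of_finrank_pos (by omega)
  have hφsurj : Function.Surjective φ := by
    have hr : Module.finrank F (LinearMap.range φ) = k := by
      rw [LinearMap.finrank_range_of_inj hφinj, hdim]
    rw [← LinearMap.range_eq_top]
    apply Submodule.eq_top_of_finrank_eq
    rw [hr, Module.finrank_fintype_fun_eq_card, Fintype.card_fin]
  let e : C ≃ₗ[F] (Fin k → F) := LinearEquiv.ofBijective φ ⟨hφinj, hφsurj⟩
  have he : ∀ (x : Fin k → F) (j : Fin k), ((e.symm x : C) : Fin n → F) (Fin.castLE hkn j) = x j := by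
    intro x j
    have : φ (e.symm x) = x := e.apply_symm_apply x
    have := congrFun this j
    simpa [φ, LinearMap.funLeft] using this
  set pk : Fin n := ⟨k, by omega⟩ with hpk
  set pk1 : Fin n := ⟨k + 1, by omega⟩ with hpk1
  have hpkne : ∀ j : Fin k, Fin.castLE hkn j ≠ pk := by
    intro j h
    have : (j : ℕ) = k := congrArg Fin.val h
    omega
  have hpk1ne : ∀ j : Fin k, Fin.castLE hkn j ≠ pk1 := by
    intro j h
    have : (j : ℕ) = k + 1 := congrArg Fin.val h
    omega
  -- the two extra coordinates as linear functionals of the first k coordinates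
  let f : (Fin k → F) →ₗ[F] F :=
    ((LinearMap.proj pk).comp C.subtype).comp (e.symm : (Fin k → F) →ₗ[F] C)
  let g : (Fin k → F) →ₗ[F] F :=
    ((LinearMap.proj pk1).comp C.subtype).comp (e.symm : (Fin k → F) →ₗ[F] C)
  have hf : ∀ x : Fin k → F, ((e.symm x : C) : Fin n → F) pk = f x := fun _ => rfl
  have hg : ∀ x : Fin k → F, ((e.symm x : C) : Fin n → F) pk1 = g x := fun _ => rfl
  -- key counting lemma: a nonzero x whose codeword vanishes in the two extra spots
  -- cannot have too many zeros
  have key : ∀ x : Fin k → F, x ≠ 0 → f x = 0 → g x = 0 →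
      k ≤ ({j | x j = 0} : Finset (Fin k)).card + 2 → False := by
    intro x hx hfx hgx hcard
    set c : Fin n → F := ((e.symm x : C) : Fin n → F) with hc
    have hcC : c ∈ C := (e.symm x : C).2
    have hcne : c ≠ 0 := by
      intro h0
      exact hx ((LinearEquiv.map_eq_zero_iff e.symm).mp (Subtype.ext h0))
    set S : Finset (Fin n) :=
      (({j | x j = 0} : Finset (Fin k)).image (Fin.castLE hkn)) ∪ {pk, pk1} with hS
    have hSzero : ∀ i ∈ S, c i = 0 := by
      intro i hi
      simp only [hS, mem_union, mem_image, mem_insert, mem_singleton, mem_filter, mem_univ,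
        true_and] at hi
      rcases hi with ⟨j, hj, rfl⟩ | rfl | rfl
      · rw [hc, he x j]; exact hj
      · rw [hc, hf]; exact hfx
      · rw [hc, hg]; exact hgx
    have hScard : k ≤ S.card := by
      have hdisj : Disjoint (({j | x j = 0} : Finset (Fin k)).image (Fin.castLE hkn))
          ({pk, pk1} : Finset (Fin n)) := by
        rw [Finset.disjoint_left]
        intro i hi hi2
        simp only [mem_image] at hi
        obtain ⟨j, _, rfl⟩ := hi
        simp only [mem_insert, mem_singleton] at hi2
        rcases hi2 with h | h
        · exact hpkne j h
        · exact hpk1ne j h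
      rw [hS, Finset.card_union_of_disjoint hdisj,
        Finset.card_image_of_injective _ (Fin.castLE_injective hkn)]
      have : ({pk, pk1} : Finset (Fin n)).card = 2 := by
        rw [Finset.card_insert_of_notMem (by simp [hpk, hpk1, Fin.ext_iff]),
          Finset.card_singleton]
      omega
    have h1 := norm_add_card_le c S hSzero
    have h2 := hlb c hcC hcne
    omega
  -- define v and w
  let v : Fin k → F := fun i => f (Pi.single i 1)
  let w : Fin k → F := fun i => g (Pi.single i 1)
  have hsingle_card : ∀ i : Fin k, ({j | (Pi.single i 1 : Fin k → F) j = 0} : Finset (Fin k)).card = k - 1 := by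
    intro i
    have : ({j | (Pi.single i 1 : Fin k → F) j = 0} : Finset (Fin k)) = Finset.univ.erase i := by
      ext j
      by_cases h : j = i <;> simp [Pi.single_apply, h]
    rw [this, Finset.card_erase_of_mem (mem_univ i), Finset.card_univ, Fintype.card_fin]
  have hsingle_ne : ∀ i : Fin k, (Pi.single i 1 : Fin k → F) ≠ 0 := by
    intro i h
    have := congrFun h i
    simp at this
  have hv : ∀ i, v i ≠ 0 := by
    intro i hvi
    by_cases hwi : w i = 0
    · exact key (Pi.single i 1) (hsingle_ne i) hvi hwi (by rw [hsingle_card i]; omega)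
    · -- use x = single i 1 at pk only: need both zero; instead use that with v i = 0,
      -- we still get k-1 zeros + pk, total k, giving weight ≤ n-k.
      set c : Fin n → F := ((e.symm (Pi.single i 1) : C) : Fin n → F) with hc
      have hcC : c ∈ C := (e.symm (Pi.single i 1) : C).2
      have hcne : c ≠ 0 := by
        intro h0
        exact hsingle_ne i ((LinearEquiv.map_eq_zero_iff e.symm).mp (Subtype.ext h0))
      set S : Finset (Fin n) :=
        (({j | (Pi.single i 1 : Fin k → F) j = 0} : Finset (Fin k)).image (Fin.castLE hkn))
          ∪ {pk} with hS
      have hSzero : ∀ i' ∈ S, c i' = 0 := by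
        intro i' hi'
        simp only [hS, mem_union, mem_image, mem_singleton, mem_filter, mem_univ, true_and] at hi'
        rcases hi' with ⟨j, hj, rfl⟩ | rfl
        · rw [hc, he _ j]; exact hj
        · rw [hc, hf]; exact hvi
      have hScard : k ≤ S.card := by
        have hdisj : Disjoint
            (({j | (Pi.single i 1 : Fin k → F) j = 0} : Finset (Fin k)).image (Fin.castLE hkn))
            ({pk} : Finset (Fin n)) := by
          rw [Finset.disjoint_left]
          intro a ha ha2
          simp only [mem_image] at ha
          obtain ⟨j, _, rfl⟩ := ha
          simp only [mem_singleton] at ha2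
          exact hpkne j ha2
        rw [hS, Finset.card_union_of_disjoint hdisj,
          Finset.card_image_of_injective _ (Fin.castLE_injective hkn),
          hsingle_card i, Finset.card_singleton]
        omega
      have h1 := norm_add_card_le c S hSzero
      have h2 := hlb c hcC hcne
      omega
  -- the map i ↦ w i / v i is injective
  have hinj : Function.Injective (fun i => w i * (v i)⁻¹) := by
    intro i j hij
    by_contra hne
    simp only at hij
    set t : F := -(v i * (v j)⁻¹) with ht
    have htne : t ≠ 0 := by
      simp only [ht, neg_ne_zero]
      exact mul_ne_zero (hv i) (inv_ne_zero (hv j))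
    set x : Fin k → F := Pi.single i 1 + Pi.single j t with hx
    have hxi : x i = 1 := by
      simp [hx, Pi.single_apply, Ne.symm hne]
    have hxj : x j = t := by
      simp [hx, Pi.single_apply, hne]
    have hxne : x ≠ 0 := by
      intro h0
      have := congrFun h0 i
      rw [hxi] at this
      exact one_ne_zero this
    have hsingle_t : (Pi.single j t : Fin k → F) = t • (Pi.single j 1 : Fin k → F) := by
      ext a
      simp [Pi.single_apply]
    have hfx : f x = 0 := by
      rw [hx, map_add, hsingle_t, map_smul]
      show v i + t • v j = 0
      rw [ht, smul_eq_mul]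
      have h1 : v i * (v j)⁻¹ * v j = v i := by
        rw [mul_assoc, inv_mul_cancel₀ (hv j), mul_one]
      rw [neg_mul, h1, add_neg_cancel]
    have hgx : g x = 0 := by
      rw [hx, map_add, hsingle_t, map_smul]
      show w i + t • w j = 0
      rw [ht, smul_eq_mul]
      have hwi : w i = w j * (v j)⁻¹ * v i := by
        have h1 := congrArg (· * v i) hij
        simpa [mul_assoc, inv_mul_cancel₀ (hv i)] using h1
      rw [hwi]
      ring
    -- count zeros of x: everything except i and j
    have hxcard : k ≤ ({a | x a = 0} : Finset (Fin k)).card + 2 := by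
      have hsub : (Finset.univ.erase i).erase j ⊆ ({a | x a = 0} : Finset (Fin k)) := by
        intro a ha
        simp only [Finset.mem_erase, mem_univ, and_true] at ha
        simp only [mem_filter, mem_univ, true_and]
        simp [hx, Pi.single_apply, Ne.symm ha.1, Ne.symm ha.2]
      have hcard2 : ((Finset.univ.erase i).erase j).card = k - 2 := by
        rw [Finset.card_erase_of_mem (Finset.mem_erase.mpr ⟨fun h => hne h.symm, Finset.mem_univ j⟩),
          Finset.card_erase_of_mem (mem_univ i), Finset.card_univ, Fintype.card_fin]
        omega
      have := Finset.card_le_card hsub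
      omega
    exact key x hxne hfx hgx hxcard
  have := Fintype.card_le_of_injective _ hinj
  rw [Fintype.card_fin] at this
  omega
end

section
/- Suppose λ ∈ 𝔽_q^N satisfies Σ_i λ_i α_i^ℓ = 0 for ℓ = 0,...,P+2X-2. Then with h(x) = f(x)g(x) as in the SDMM encoding, Σ_{i=1}^N λ_i h(α_i) = Σ_{j=1}^P Σ_{j'=1}^P A_j B_{j'} (Σ_{i=1}^N λ_i α_i^{2X+j+j'-2}), i.e., all interference terms involving the random matrices cancel. -/
/-- Suppose `λ ∈ 𝔽_q^N` satisfies `∑ᵢ λᵢ αᵢ^ℓ = 0` for `ℓ = 0, …, P + 2X - 2`.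
Then with `h(x) = f(x)g(x)` as in the SDMM encoding,
`∑ᵢ λᵢ h(αᵢ) = ∑ⱼ ∑ⱼ' A_j B_{j'} (∑ᵢ λᵢ αᵢ^{2X+j+j'-2})`:
all interference terms involving the random matrices cancel. -/
theorem stmt11 {F : Type*} [Field F] {t s r P X N : ℕ} (hP : 0 < P) (hX : 0 < X)
    (A : Fin P → Matrix (Fin t) (Fin s) F) (R : Fin X → Matrix (Fin t) (Fin s) F)
    (B : Fin P → Matrix (Fin s) (Fin r) F) (S : Fin X → Matrix (Fin s) (Fin r) F)
    (α lam : Fin N → F) (hα : Function.Injective α)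
    (horth : ∀ ℓ : ℕ, ℓ ≤ P + 2 * X - 2 → ∑ i, lam i * α i ^ ℓ = 0) :
    ∑ i, lam i •
        ((∑ k : Fin X, α i ^ (k : ℕ) • R k + ∑ j : Fin P, α i ^ (X + (j : ℕ)) • A j) *
          (∑ k' : Fin X, α i ^ (k' : ℕ) • S k' +
            ∑ j' : Fin P, α i ^ (X + (j' : ℕ)) • B j')) =
      ∑ j : Fin P, ∑ j' : Fin P,
        (∑ i, lam i * α i ^ (2 * X + (j : ℕ) + (j' : ℕ))) • (A j * B j') := by
  have key : ∀ i : Fin N, lam i •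
        ((∑ k : Fin X, α i ^ (k : ℕ) • R k + ∑ j : Fin P, α i ^ (X + (j : ℕ)) • A j) *
          (∑ k' : Fin X, α i ^ (k' : ℕ) • S k' +
            ∑ j' : Fin P, α i ^ (X + (j' : ℕ)) • B j')) =
      (∑ k : Fin X, ∑ k' : Fin X, (lam i * α i ^ ((k:ℕ) + (k':ℕ))) • (R k * S k'))
      + (∑ k : Fin X, ∑ j' : Fin P, (lam i * α i ^ ((k:ℕ) + (X + (j':ℕ)))) • (R k * B j'))
      + (∑ j : Fin P, ∑ k' : Fin X, (lam i * α i ^ ((X + (j:ℕ)) + (k':ℕ))) • (A j * S k'))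
      + (∑ j : Fin P, ∑ j' : Fin P, (lam i * α i ^ ((X + (j:ℕ)) + (X + (j':ℕ)))) • (A j * B j')) := by
    intro i
    simp only [Matrix.add_mul, Matrix.mul_add, Matrix.sum_mul, Matrix.mul_sum,
      Matrix.smul_mul, Matrix.mul_smul, smul_smul, smul_add, Finset.smul_sum, ← pow_add]
    rw [Finset.sum_add_distrib, Finset.sum_add_distrib]
    have e1 : ∑ x : Fin X, ∑ y : Fin X, (lam i * α i ^ ((x:ℕ) + (y:ℕ))) • (R y * S x)
        = ∑ k : Fin X, ∑ k' : Fin X, (lam i * α i ^ ((k:ℕ) + (k':ℕ))) • (R k * S k') := by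
      rw [Finset.sum_comm]
      exact Finset.sum_congr rfl fun y _ => Finset.sum_congr rfl fun x _ => by
        rw [Nat.add_comm (x:ℕ) (y:ℕ)]
    have e2 : ∑ x : Fin P, ∑ y : Fin X, (lam i * α i ^ (X + (x:ℕ) + (y:ℕ))) • (R y * B x)
        = ∑ k : Fin X, ∑ j' : Fin P, (lam i * α i ^ ((k:ℕ) + (X + (j':ℕ)))) • (R k * B j') := by
      rw [Finset.sum_comm]
      exact Finset.sum_congr rfl fun y _ => Finset.sum_congr rfl fun x _ => by
        rw [Nat.add_comm (X + (x:ℕ)) (y:ℕ)]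
    have e3 : ∑ x : Fin X, ∑ y : Fin P, (lam i * α i ^ ((x:ℕ) + (X + (y:ℕ)))) • (A y * S x)
        = ∑ j : Fin P, ∑ k' : Fin X, (lam i * α i ^ (X + (j:ℕ) + (k':ℕ))) • (A j * S k') := by
      rw [Finset.sum_comm]
      exact Finset.sum_congr rfl fun y _ => Finset.sum_congr rfl fun x _ => by
        rw [Nat.add_comm (x:ℕ) (X + (y:ℕ))]
    have e4 : ∑ x : Fin P, ∑ y : Fin P, (lam i * α i ^ (X + (x:ℕ) + (X + (y:ℕ)))) • (A y * B x)
        = ∑ j : Fin P, ∑ j' : Fin P, (lam i * α i ^ (X + (j:ℕ) + (X + (j':ℕ)))) • (A j * B j') := by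
      rw [Finset.sum_comm]
      exact Finset.sum_congr rfl fun y _ => Finset.sum_congr rfl fun x _ => by
        rw [Nat.add_comm (X + (x:ℕ)) (X + (y:ℕ))]
    rw [e1, e2, e3, e4]
    abel
  simp only [key]
  rw [Finset.sum_add_distrib, Finset.sum_add_distrib, Finset.sum_add_distrib]
  have h1 : ∑ i : Fin N, ∑ k : Fin X, ∑ k' : Fin X,
      (lam i * α i ^ ((k:ℕ) + (k':ℕ))) • (R k * S k') = 0 := by
    rw [Finset.sum_comm]
    refine Finset.sum_eq_zero fun k _ => ?_
    rw [Finset.sum_comm]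
    refine Finset.sum_eq_zero fun k' _ => ?_
    rw [← Finset.sum_smul, horth _ (by omega), zero_smul]
  have h2 : ∑ i : Fin N, ∑ k : Fin X, ∑ j' : Fin P,
      (lam i * α i ^ ((k:ℕ) + (X + (j':ℕ)))) • (R k * B j') = 0 := by
    rw [Finset.sum_comm]
    refine Finset.sum_eq_zero fun k _ => ?_
    rw [Finset.sum_comm]
    refine Finset.sum_eq_zero fun j' _ => ?_
    rw [← Finset.sum_smul, horth _ (by omega), zero_smul]
  have h3 : ∑ i : Fin N, ∑ j : Fin P, ∑ k' : Fin X,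
      (lam i * α i ^ ((X + (j:ℕ)) + (k':ℕ))) • (A j * S k') = 0 := by
    rw [Finset.sum_comm]
    refine Finset.sum_eq_zero fun j _ => ?_
    rw [Finset.sum_comm]
    refine Finset.sum_eq_zero fun k' _ => ?_
    rw [← Finset.sum_smul, horth _ (by omega), zero_smul]
  rw [h1, h2, h3, zero_add, zero_add, zero_add]
  rw [Finset.sum_comm]
  refine Finset.sum_congr rfl fun j _ => ?_
  rw [Finset.sum_comm]
  refine Finset.sum_congr rfl fun j' _ => ?_
  have e : (X + (j:ℕ)) + (X + (j':ℕ)) = 2 * X + (j:ℕ) + (j':ℕ) := by omega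
  rw [e, ← Finset.sum_smul]
end

section
/- Let N = 2P+2X+S-1 ≤ q and α ∈ 𝔽_q^N with distinct entries. Then RS_{P+2X-1}(α)^⊥ = GRS_{P+S}(α,ω) contains a nonzero codeword λ of Hamming weight exactly P+2X that is not in RS_{P+2X}(α)^⊥ = GRS_{P+S-1}(α,ω). -/
/-!
For `deg h < N - 1` one has `∑ ω_i h(α_i) = 0`: the sum is the coefficient of `X ^ (N - 1)` in the
Lagrange interpolant of `h`, which is `h` itself. Hence `GRS_{N-k}(α, ω)` is orthogonal to
`RS_k(α)`, and it is the whole dual because evaluation at `N` distinct points is injective on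
polynomials of degree `< N`, so both codes have the expected dimensions. The codeword `λ` is `ω`
times the values of the nodal polynomial of `P + S - 1` of the points: it vanishes exactly there,
and its degree `P + S - 1` puts it in `GRS_{P+S}` but not in `GRS_{P+S-1}`.
-/

open Polynomial Finset

section

variable {F : Type*} [Field F] {n : ℕ}

noncomputable def weightedEval (α ν : Fin n → F) : F[X] →ₗ[F] (Fin n → F) where
  toFun f i := ν i * f.eval (α i)
  map_add' _ _ := by funext i; simp [mul_add]
  map_smul' _ _ := by funext i; simp [mul_left_comm]

theorem GRS_eq_map (k : ℕ) (α ν : Fin n → F) :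
    GRS k α ν = (degreeLT F k).map (weightedEval α ν) :=
  rfl

theorem eq_of_degrees_lt_of_weightedEval_eq {α ν : Fin n → F} (hα : Function.Injective α)
    (hν : ∀ i, ν i ≠ 0) {f g : F[X]} (hf : f.degree < n) (hg : g.degree < n)
    (hfg : weightedEval α ν f = weightedEval α ν g) : f = g := by
  rw [← Fintype.card_fin n, ← card_univ] at hf hg
  refine Polynomial.eq_of_degrees_lt_of_eval_index_eq _ hα.injOn hf hg fun i _ => ?_
  exact mul_left_cancel₀ (hν i) (congrFun hfg i)

theorem weightedEval_mem_GRS_iff {α ν : Fin n → F} (hα : Function.Injective α)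
    (hν : ∀ i, ν i ≠ 0) {k : ℕ} (hkn : k ≤ n) {f : F[X]} (hf : f.degree < n) :
    weightedEval α ν f ∈ GRS k α ν ↔ f.degree < k := by
  rw [GRS_eq_map]
  refine ⟨?_, fun hfk => ⟨f, mem_degreeLT.2 hfk, rfl⟩⟩
  rintro ⟨g, hg, hgf⟩
  have hgn : g.degree < n := (mem_degreeLT.1 hg).trans_le (by exact_mod_cast hkn)
  rwa [← eq_of_degrees_lt_of_weightedEval_eq hα hν hgn hf hgf, ← mem_degreeLT]

theorem finrank_GRS {α ν : Fin n → F} (hα : Function.Injective α) (hν : ∀ i, ν i ≠ 0)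
    {k : ℕ} (hkn : k ≤ n) : Module.finrank F (GRS k α ν) = k := by
  have hinj : Function.Injective (weightedEval α ν ∘ₗ (degreeLT F k).subtype) := by
    rintro ⟨f, hf⟩ ⟨g, hg⟩ hfg
    have hkn' : (k : WithBot ℕ) ≤ n := by exact_mod_cast hkn
    exact Subtype.ext <| eq_of_degrees_lt_of_weightedEval_eq hα hν
      ((mem_degreeLT.1 hf).trans_le hkn') ((mem_degreeLT.1 hg).trans_le hkn') hfg
  rw [GRS_eq_map, ← Submodule.range_subtype (degreeLT F k), ← LinearMap.range_comp,
    LinearMap.finrank_range_of_inj hinj, (degreeLTEquiv F k).finrank_eq, Module.finrank_fin_fun]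

theorem dualCode_eq_comap_dualAnnihilator (C : Submodule F (Fin n → F)) :
    dualCode C = C.dualAnnihilator.comap (dotProductEquiv F (Fin n)).toLinearMap := by
  ext x
  simp only [Submodule.mem_comap, Submodule.mem_dualAnnihilator]
  exact Iff.rfl

theorem finrank_dualCode (C : Submodule F (Fin n → F)) :
    Module.finrank F (dualCode C) = n - Module.finrank F C := by
  have hsum := Subspace.finrank_add_finrank_dualAnnihilator_eq C
  rw [Module.finrank_fin_fun] at hsum
  rw [dualCode_eq_comap_dualAnnihilator, Submodule.comap_equiv_eq_map_symm,
    LinearEquiv.finrank_map_eq]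
  omega

noncomputable def dualWeight (α : Fin n → F) (i : Fin n) : F :=
  (∏ j ∈ univ.erase i, (α i - α j))⁻¹

theorem dualWeight_ne_zero {α : Fin n → F} (hα : Function.Injective α) (i : Fin n) :
    dualWeight α i ≠ 0 :=
  inv_ne_zero <| prod_ne_zero_iff.2 fun _ hj =>
    sub_ne_zero_of_ne fun h => (mem_erase.1 hj).1 (hα h).symm

theorem sum_dualWeight_mul_eval_eq_zero {α : Fin n → F} (hα : Function.Injective α) {h : F[X]}
    (hh : h.degree < (n - 1 : ℕ)) : ∑ i, dualWeight α i * h.eval (α i) = 0 := by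
  have hcoeff := Lagrange.coeff_eq_sum (s := univ) hα.injOn (P := h)
    (hh.trans_le (by simp))
  simp only [card_univ, Fintype.card_fin, coeff_eq_zero_of_degree_lt hh, div_eq_mul_inv] at hcoeff
  simp only [dualWeight, hcoeff, mul_comm]

theorem GRS_dualWeight_le_dualCode {α : Fin n → F} (hα : Function.Injective α) (k : ℕ) :
    GRS (n - k) α (dualWeight α) ≤ dualCode (GRS k α 1) := by
  rintro _ ⟨f, hf, rfl⟩ _ ⟨g, hg, rfl⟩
  have hfg : (f * g).degree < (n - 1 : ℕ) := by
    rcases eq_or_ne (f * g) 0 with h0 | h0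
    · simp [h0]
    obtain ⟨hf0, hg0⟩ := mul_ne_zero_iff.1 h0
    have hf' := (natDegree_lt_iff_degree_lt hf0).2 (mem_degreeLT.1 hf)
    have hg' := (natDegree_lt_iff_degree_lt hg0).2 (mem_degreeLT.1 hg)
    rw [degree_eq_natDegree h0, Nat.cast_lt, natDegree_mul hf0 hg0]
    omega
  simpa [weightedEval, mul_assoc, mul_comm, mul_left_comm] using
    sum_dualWeight_mul_eval_eq_zero hα hfg

theorem dualCode_GRS_one {α : Fin n → F} (hα : Function.Injective α) {k : ℕ} (hkn : k ≤ n) :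
    dualCode (GRS k α 1) = GRS (n - k) α (dualWeight α) := by
  refine (Submodule.eq_of_le_of_finrank_le (GRS_dualWeight_le_dualCode hα k) ?_).symm
  rw [finrank_dualCode, finrank_GRS (ν := 1) hα (fun _ => one_ne_zero) hkn,
    finrank_GRS hα (dualWeight_ne_zero hα) (Nat.sub_le n k)]

theorem hammingNorm_weightedEval_nodal [DecidableEq F] {α ν : Fin n → F}
    (hα : Function.Injective α) (hν : ∀ i, ν i ≠ 0) (T : Finset (Fin n)) :
    hammingNorm (weightedEval α ν (Lagrange.nodal T α)) = n - #T := by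
  have hsupp : ({i | weightedEval α ν (Lagrange.nodal T α) i ≠ 0} : Finset (Fin n)) = Tᶜ := by
    ext i
    simp only [weightedEval, LinearMap.coe_mk, AddHom.coe_mk, ne_eq, mul_eq_zero, hν i,
      false_or, mem_filter, mem_univ, true_and, mem_compl]
    refine ⟨fun h hi => h (Lagrange.eval_nodal_at_node hi), fun hi => ?_⟩
    exact Lagrange.eval_nodal_not_at_node fun j hj h => hi (by rwa [hα h])
  rw [hammingNorm, hsupp, card_compl, Fintype.card_fin]

end

theorem stmt15_general {F : Type*} [Field F] [DecidableEq F] {P X S : ℕ}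
    (hP : 0 < P)
    (α : Fin (2 * P + 2 * X + S - 1) → F) (hα : Function.Injective α) :
    dualCode (GRS (P + 2 * X - 1) α 1) =
        GRS (P + S) α (fun i => (∏ j ∈ Finset.univ.erase i, (α i - α j))⁻¹) ∧
    dualCode (GRS (P + 2 * X) α 1) =
        GRS (P + S - 1) α (fun i => (∏ j ∈ Finset.univ.erase i, (α i - α j))⁻¹) ∧
    ∃ lam, lam ∈ GRS (P + S) α (fun i => (∏ j ∈ Finset.univ.erase i, (α i - α j))⁻¹) ∧
      lam ≠ 0 ∧ hammingNorm lam = P + 2 * X ∧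
      lam ∉ GRS (P + S - 1) α (fun i => (∏ j ∈ Finset.univ.erase i, (α i - α j))⁻¹) := by
  have hdual {k m : ℕ} (hk : k ≤ 2 * P + 2 * X + S - 1) (hm : 2 * P + 2 * X + S - 1 - k = m) :
      dualCode (GRS k α 1) = GRS m α (dualWeight α) :=
    hm ▸ dualCode_GRS_one hα hk
  obtain ⟨T, -, hT⟩ := exists_subset_card_eq
    (s := (univ : Finset (Fin (2 * P + 2 * X + S - 1)))) (n := P + S - 1)
    (by simp only [card_univ, Fintype.card_fin]; omega)
  have hdeg : (Lagrange.nodal T α).degree = (P + S - 1 : ℕ) := by rw [Lagrange.degree_nodal, hT]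
  have hmem {k : ℕ} (hk : k ≤ 2 * P + 2 * X + S - 1) :
      weightedEval α (dualWeight α) (Lagrange.nodal T α) ∈ GRS k α (dualWeight α) ↔
        P + S - 1 < k := by
    rw [weightedEval_mem_GRS_iff hα (dualWeight_ne_zero hα) hk
      (by rw [hdeg, Nat.cast_lt]; omega), hdeg, Nat.cast_lt]
  have hweight := hammingNorm_weightedEval_nodal hα (dualWeight_ne_zero hα) T
  rw [hT] at hweight
  refine ⟨hdual (by omega) (by omega), hdual (by omega) (by omega),
    weightedEval α (dualWeight α) (Lagrange.nodal T α), (hmem (by omega)).2 (by omega),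
    hammingNorm_ne_zero_iff.1 (by omega), by omega, fun h => ?_⟩
  have := (hmem (by omega)).1 h
  omega

/-- Let `N = 2P + 2X + S - 1 ≤ q` and `α ∈ 𝔽_q^N` have distinct entries.  Then
`RS_{P+2X-1}(α)^⊥ = GRS_{P+S}(α, ω)` and `RS_{P+2X}(α)^⊥ = GRS_{P+S-1}(α, ω)`,
and the former contains a nonzero codeword `λ` of Hamming weight exactly
`P + 2X` that is not in the latter. -/
theorem stmt15 {F : Type*} [Field F] [Fintype F] [DecidableEq F] {P X S : ℕ}
    (hP : 0 < P) (hX : 0 < X) (hS : 0 < S)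
    (hq : 2 * P + 2 * X + S - 1 ≤ Fintype.card F)
    (α : Fin (2 * P + 2 * X + S - 1) → F) (hα : Function.Injective α) :
    dualCode (GRS (P + 2 * X - 1) α 1) =
        GRS (P + S) α (fun i => (∏ j ∈ Finset.univ.erase i, (α i - α j))⁻¹) ∧
    dualCode (GRS (P + 2 * X) α 1) =
        GRS (P + S - 1) α (fun i => (∏ j ∈ Finset.univ.erase i, (α i - α j))⁻¹) ∧
    ∃ lam, lam ∈ GRS (P + S) α (fun i => (∏ j ∈ Finset.univ.erase i, (α i - α j))⁻¹) ∧
      lam ≠ 0 ∧ hammingNorm lam = P + 2 * X ∧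
      lam ∉ GRS (P + S - 1) α (fun i => (∏ j ∈ Finset.univ.erase i, (α i - α j))⁻¹) :=
  stmt15_general hP α hα
end

section
/- In the DFT scheme over 𝔽_q with N = P+2X dividing q-1 and α_1,...,α_N the Nth roots of unity, for h(x) = f(x)g(x) with f(x) = Σ_{j=1}^P A_j x^{j-1} + Σ_{k=1}^X R_k x^{P+k-1} and g(x) = Σ_{j'=1}^P B_{j'} x^{-j'+1} + Σ_{k'=1}^X S_{k'} x^{-P-X-k'+1} (a Laurent polynomial), one has (1/N) Σ_{i=1}^N h(α_i) = Σ_{j=1}^P A_j B_j. -/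
open Finset Polynomial

lemma root_sum_zpow {F : Type*} [Field F] {N : ℕ} (hN : 0 < N) (α : Fin N → F)
    (hα : Function.Injective α) (hroot : ∀ i, α i ^ N = 1) (ℓ : ℤ) :
    ∑ i, α i ^ ℓ = if (N : ℤ) ∣ ℓ then (N : F) else 0 := by
  have hne : ∀ i, α i ≠ 0 := by
    intro i h
    have h1 := hroot i
    rw [h, zero_pow hN.ne'] at h1
    exact one_ne_zero h1.symm
  classical
  by_cases hd : (N : ℤ) ∣ ℓ
  · obtain ⟨c, rfl⟩ := hd
    rw [if_pos (Dvd.intro c rfl)]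
    have : ∀ i, α i ^ ((N : ℤ) * c) = 1 := by
      intro i
      rw [zpow_mul, zpow_natCast, hroot i, one_zpow]
    simp [this, Finset.sum_const]
  · rw [if_neg hd]
    -- reduce to natural exponent m = ℓ % N
    set m : ℕ := (ℓ % (N : ℤ)).toNat with hm
    have hmod_nonneg : 0 ≤ ℓ % (N : ℤ) := Int.emod_nonneg ℓ (by exact_mod_cast hN.ne')
    have hmod_lt : ℓ % (N : ℤ) < N := Int.emod_lt_of_pos ℓ (by exact_mod_cast hN)
    have hm0 : m ≠ 0 := by
      intro h
      apply hd
      rw [Int.dvd_iff_emod_eq_zero]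
      omega
    have hmlt : m < N := by omega
    have hpow : ∀ i, α i ^ ℓ = α i ^ m := by
      intro i
      have : ℓ = (N : ℤ) * (ℓ / N) + ℓ % N := (Int.mul_ediv_add_emod ℓ N).symm
      rw [this, zpow_add₀ (hne i), zpow_mul, zpow_natCast, hroot i, one_zpow, one_mul]
      rw [show ℓ % (N : ℤ) = (m : ℤ) by omega, zpow_natCast]
    simp_rw [hpow]
    -- the image of α is exactly the N-th roots of unity
    set T : Finset F := Finset.univ.image α with hT
    have hcardT : T.card = N := by
      rw [hT, Finset.card_image_of_injective _ hα, Finset.card_univ, Fintype.card_fin]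
    have hTsub : T ⊆ Polynomial.nthRootsFinset N (1 : F) := by
      intro x hx
      rw [hT, Finset.mem_image] at hx
      obtain ⟨i, _, rfl⟩ := hx
      exact (Polynomial.mem_nthRootsFinset hN (1 : F)).2 (hroot i)
    have hTeq : T = Polynomial.nthRootsFinset N (1 : F) := by
      apply Finset.eq_of_subset_of_card_le hTsub
      calc (Polynomial.nthRootsFinset N (1 : F)).card ≤ N := by
            apply le_trans (Multiset.toFinset_card_le _)
            exact_mod_cast Polynomial.card_nthRoots N (1 : F)
        _ = T.card := hcardT.symm
    -- find u in T with u ^ m ≠ 1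
    have hexu : ∃ u ∈ T, u ^ m ≠ 1 := by
      by_contra h
      push_neg at h
      have hsub : T ⊆ (Polynomial.nthRoots m (1 : F)).toFinset := by
        intro x hx
        rw [Multiset.mem_toFinset, Polynomial.mem_nthRoots (Nat.pos_of_ne_zero hm0)]
        exact h x hx
      have := Finset.card_le_card hsub
      have h2 : (Polynomial.nthRoots m (1 : F)).toFinset.card ≤ m := by
        apply le_trans (Multiset.toFinset_card_le _)
        exact_mod_cast Polynomial.card_nthRoots m (1 : F)
      omega
    obtain ⟨u, huT, hum⟩ := hexu
    have hu0 : u ≠ 0 := by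
      intro h
      have := hTeq ▸ huT
      rw [Polynomial.mem_nthRootsFinset hN (1 : F), h, zero_pow hN.ne'] at this
      exact one_ne_zero this.symm
    -- S = sum over T
    have hS : ∑ i, α i ^ m = ∑ x ∈ T, x ^ m := by
      rw [hT, Finset.sum_image]
      intro a _ b _ h
      exact hα h
    rw [hS]
    -- multiplication by u permutes T
    have himg : T.image (fun x => u * x) = T := by
      apply Finset.eq_of_subset_of_card_le
      · intro x hx
        rw [Finset.mem_image] at hx
        obtain ⟨y, hy, rfl⟩ := hx
        rw [hTeq] at hy ⊢
        rw [Polynomial.mem_nthRootsFinset hN (1 : F)] at hy ⊢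
        rw [mul_pow, hy, mul_one]
        exact (Polynomial.mem_nthRootsFinset hN (1 : F)).1 (hTeq ▸ huT)
      · rw [Finset.card_image_of_injective _ (mul_right_injective₀ hu0)]
    have key : u ^ m * ∑ x ∈ T, x ^ m = ∑ x ∈ T, x ^ m := by
      conv_rhs => rw [← himg]
      rw [Finset.sum_image (fun a _ b _ h => mul_left_cancel₀ hu0 h)]
      rw [Finset.mul_sum]
      exact Finset.sum_congr rfl fun x _ => (mul_pow u x m).symm
    have : (u ^ m - 1) * ∑ x ∈ T, x ^ m = 0 := by
      rw [sub_mul, one_mul, key, sub_self]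
    rcases mul_eq_zero.1 this with h | h
    · exact absurd (sub_eq_zero.1 h) hum
    · exact h


/-- In the DFT scheme over `𝔽_q` with `N = P + 2X` dividing `q - 1` and
`α₁, …, α_N` the `N`th roots of unity, for `h(x) = f(x)g(x)` with
`f(x) = ∑ⱼ Aⱼ x^{j-1} + ∑ₖ Rₖ x^{P+k-1}` and
`g(x) = ∑ⱼ' Bⱼ' x^{-j'+1} + ∑ₖ' Sₖ' x^{-P-X-k'+1}` (a Laurent polynomial),
one has `(1/N) ∑ᵢ h(αᵢ) = ∑ⱼ Aⱼ Bⱼ`. -/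
theorem stmt17 {F : Type*} [Field F] [Fintype F] {t s r P X : ℕ}
    (hP : 0 < P) (hX : 0 < X)
    (hdvd : (P + 2 * X) ∣ Fintype.card F - 1) (hNne : ((P + 2 * X : ℕ) : F) ≠ 0)
    (α : Fin (P + 2 * X) → F) (hα : Function.Injective α)
    (hroot : ∀ i, α i ^ (P + 2 * X) = 1)
    (A : Fin P → Matrix (Fin t) (Fin s) F) (R : Fin X → Matrix (Fin t) (Fin s) F)
    (B : Fin P → Matrix (Fin s) (Fin r) F) (S : Fin X → Matrix (Fin s) (Fin r) F) :
    (((P + 2 * X : ℕ) : F))⁻¹ •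
      ∑ i, ((∑ j : Fin P, α i ^ (j : ℕ) • A j +
              ∑ k : Fin X, α i ^ (P + (k : ℕ)) • R k) *
            (∑ j' : Fin P, α i ^ (-((j' : ℕ) : ℤ)) • B j' +
              ∑ k' : Fin X, α i ^ (-((P + X + (k' : ℕ) : ℕ) : ℤ)) • S k')) =
      ∑ j, A j * B j := by
  classical
  have hN : 0 < P + 2 * X := by omega
  have hne : ∀ i, α i ≠ 0 := by
    intro i h
    have h1 := hroot i
    rw [h, zero_pow (by omega : P + 2 * X ≠ 0)] at h1
    exact one_ne_zero h1.symm
  have key := root_sum_zpow hN α hα hroot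
  have hprod : ∀ i : Fin (P + 2 * X),
      ((∑ j : Fin P, α i ^ (j : ℕ) • A j + ∑ k : Fin X, α i ^ (P + (k : ℕ)) • R k) *
        (∑ j' : Fin P, α i ^ (-((j' : ℕ) : ℤ)) • B j' +
          ∑ k' : Fin X, α i ^ (-((P + X + (k' : ℕ) : ℕ) : ℤ)) • S k')) =
      (∑ j : Fin P, ∑ j' : Fin P,
        α i ^ (((j : ℕ) : ℤ) - ((j' : ℕ) : ℤ)) • (A j * B j')) +
      (∑ j : Fin P, ∑ k' : Fin X,
        α i ^ (((j : ℕ) : ℤ) - ((P : ℤ) + (X : ℤ) + ((k' : ℕ) : ℤ))) • (A j * S k')) +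
      (∑ k : Fin X, ∑ j' : Fin P,
        α i ^ (((P : ℤ) + ((k : ℕ) : ℤ)) - ((j' : ℕ) : ℤ)) • (R k * B j')) +
      (∑ k : Fin X, ∑ k' : Fin X,
        α i ^ (((k : ℕ) : ℤ) - (X : ℤ) - ((k' : ℕ) : ℤ)) • (R k * S k')) := by
    intro i
    rw [Matrix.add_mul, Matrix.mul_add, Matrix.mul_add, ← add_assoc]
    simp_rw [Matrix.sum_mul, Matrix.mul_sum, Matrix.smul_mul, Matrix.mul_smul, smul_smul]
    congr 1
    congr 1
    congr 1
    · refine Finset.sum_congr rfl fun j _ => Finset.sum_congr rfl fun j' _ => ?_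
      rw [← zpow_natCast (α i) (j : ℕ), ← zpow_add₀ (hne i)]
      congr 2
      all_goals (push_cast; ring)
    · refine Finset.sum_congr rfl fun j _ => Finset.sum_congr rfl fun k' _ => ?_
      rw [← zpow_natCast (α i) (j : ℕ), ← zpow_add₀ (hne i)]
      congr 2
      all_goals (push_cast; ring)
    · refine Finset.sum_congr rfl fun k _ => Finset.sum_congr rfl fun j' _ => ?_
      rw [← zpow_natCast (α i) (P + (k : ℕ)), ← zpow_add₀ (hne i)]
      congr 2
      all_goals (push_cast; ring)
    · refine Finset.sum_congr rfl fun k _ => Finset.sum_congr rfl fun k' _ => ?_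
      rw [← zpow_natCast (α i) (P + (k : ℕ)), ← zpow_add₀ (hne i)]
      congr 2
      all_goals (push_cast; ring)
  simp_rw [hprod]
  rw [Finset.sum_add_distrib, Finset.sum_add_distrib, Finset.sum_add_distrib]
  have swap3 : ∀ {n₁ n₂ : ℕ} (f : Fin (P + 2 * X) → Fin n₁ → Fin n₂ → Matrix (Fin t) (Fin r) F),
      ∑ i, ∑ a, ∑ b, f i a b = ∑ a, ∑ b, ∑ i, f i a b := by
    intro n₁ n₂ f
    rw [Finset.sum_comm]
    exact Finset.sum_congr rfl fun a _ => Finset.sum_comm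
  rw [swap3, swap3, swap3, swap3]
  simp_rw [← Finset.sum_smul, key]
  have hAB : ∀ (j j' : Fin P),
      (((P + 2 * X : ℕ) : ℤ) ∣ (((j : ℕ) : ℤ) - ((j' : ℕ) : ℤ))) = (j = j') := by
    intro j j'
    apply propext
    constructor
    · intro hd
      have hj := j.isLt; have hj' := j'.isLt
      have h0 := Int.eq_zero_of_dvd_of_natAbs_lt_natAbs hd (by omega)
      exact Fin.ext (by omega)
    · rintro rfl; simp
  have hAS : ∀ (j : Fin P) (k' : Fin X),
      (((P + 2 * X : ℕ) : ℤ) ∣ (((j : ℕ) : ℤ) - ((P : ℤ) + (X : ℤ) + ((k' : ℕ) : ℤ)))) = False := by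
    intro j k'
    apply eq_false
    intro hd
    have hj := j.isLt; have hk := k'.isLt
    have h0 := Int.eq_zero_of_dvd_of_natAbs_lt_natAbs hd (by omega)
    omega
  have hRB : ∀ (k : Fin X) (j' : Fin P),
      (((P + 2 * X : ℕ) : ℤ) ∣ (((P : ℤ) + ((k : ℕ) : ℤ)) - ((j' : ℕ) : ℤ))) = False := by
    intro k j'
    apply eq_false
    intro hd
    have hk := k.isLt; have hj' := j'.isLt
    have h0 := Int.eq_zero_of_dvd_of_natAbs_lt_natAbs hd (by omega)
    omega
  have hRS : ∀ (k k' : Fin X),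
      (((P + 2 * X : ℕ) : ℤ) ∣ (((k : ℕ) : ℤ) - (X : ℤ) - ((k' : ℕ) : ℤ))) = False := by
    intro k k'
    apply eq_false
    intro hd
    have hk := k.isLt; have hk' := k'.isLt
    have h0 := Int.eq_zero_of_dvd_of_natAbs_lt_natAbs hd (by omega)
    omega
  simp only [hAB, hAS, hRB, hRS, if_false, zero_smul, Finset.sum_const_zero, add_zero]
  simp_rw [ite_smul, zero_smul, Finset.sum_ite_eq, Finset.mem_univ, if_true]
  rw [← Finset.smul_sum, smul_smul, inv_mul_cancel₀ hNne, one_smul]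
end

section
/- If λ is a vector in RS_{P+2X-1}(α)^⊥ with support T and Σ_i λ_i α_i^ℓ = 0 for ℓ ≤ P+2X-2 but Σ_i λ_i α_i^{P+2X-1} ≠ 0, then the sum Σ_{i∈T} λ_i h(α_i) over only the support of λ equals a M b^T with M invertible; hence the responses of the |T| workers indexed by T suffice to recover a b^T. -/
/-- If `λ ∈ RS_{P+2X-1}(α)^⊥` with support `T`, i.e. `∑ᵢ λᵢ αᵢ^ℓ = 0` for
`ℓ ≤ P + 2X - 2` but `∑ᵢ λᵢ αᵢ^{P+2X-1} ≠ 0`, then the sum `∑_{i ∈ T} λᵢ h(αᵢ)`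
over only the support of `λ` equals `a M bᵀ` with `M` invertible
(`M_{j,j'} = ∑ᵢ λᵢ αᵢ^{2X+j+j'-2}`); hence the responses of the workers indexed
by `T` suffice to recover `a bᵀ`. -/
theorem stmt18 {F : Type*} [Field F] [DecidableEq F] {t s r P X N : ℕ}
    (hP : 0 < P) (hX : 0 < X)
    (A : Fin P → Matrix (Fin t) (Fin s) F) (R : Fin X → Matrix (Fin t) (Fin s) F)
    (B : Fin P → Matrix (Fin s) (Fin r) F) (S : Fin X → Matrix (Fin s) (Fin r) F)
    (α lam : Fin N → F) (hα : Function.Injective α)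
    (horth : ∀ ℓ : ℕ, ℓ ≤ P + 2 * X - 2 → ∑ i, lam i * α i ^ ℓ = 0)
    (hne : ∑ i, lam i * α i ^ (P + 2 * X - 1) ≠ 0) :
    (∑ i ∈ Finset.univ.filter (fun i => lam i ≠ 0), lam i •
        ((∑ k : Fin X, α i ^ (k : ℕ) • R k + ∑ j : Fin P, α i ^ (X + (j : ℕ)) • A j) *
          (∑ k' : Fin X, α i ^ (k' : ℕ) • S k' +
            ∑ j' : Fin P, α i ^ (X + (j' : ℕ)) • B j')) =
      ∑ j : Fin P, ∑ j' : Fin P,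
        (∑ i, lam i * α i ^ (2 * X + (j : ℕ) + (j' : ℕ))) • (A j * B j')) ∧
    IsUnit (Matrix.of fun j j' : Fin P =>
      ∑ i, lam i * α i ^ (2 * X + (j : ℕ) + (j' : ℕ))) := by
  constructor
  · have hfull : (∑ i ∈ Finset.univ.filter (fun i => lam i ≠ 0), lam i •
        ((∑ k : Fin X, α i ^ (k : ℕ) • R k + ∑ j : Fin P, α i ^ (X + (j : ℕ)) • A j) *
          (∑ k' : Fin X, α i ^ (k' : ℕ) • S k' +
            ∑ j' : Fin P, α i ^ (X + (j' : ℕ)) • B j'))) =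
        ∑ i, lam i •
        ((∑ k : Fin X, α i ^ (k : ℕ) • R k + ∑ j : Fin P, α i ^ (X + (j : ℕ)) • A j) *
          (∑ k' : Fin X, α i ^ (k' : ℕ) • S k' +
            ∑ j' : Fin P, α i ^ (X + (j' : ℕ)) • B j')) := by
      apply Finset.sum_subset (Finset.filter_subset _ _)
      intro i _ hi
      simp only [Finset.mem_filter, Finset.mem_univ, true_and, not_not] at hi
      simp [hi]
    rw [hfull]
    have expand : ∀ i : Fin N, lam i •
        ((∑ k : Fin X, α i ^ (k : ℕ) • R k + ∑ j : Fin P, α i ^ (X + (j : ℕ)) • A j) *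
          (∑ k' : Fin X, α i ^ (k' : ℕ) • S k' +
            ∑ j' : Fin P, α i ^ (X + (j' : ℕ)) • B j')) =
        (∑ k : Fin X, ∑ k' : Fin X, (lam i * α i ^ ((k : ℕ) + (k' : ℕ))) • (R k * S k'))
      + (∑ k : Fin X, ∑ j' : Fin P, (lam i * α i ^ ((k : ℕ) + (X + (j' : ℕ)))) • (R k * B j'))
      + (∑ j : Fin P, ∑ k' : Fin X, (lam i * α i ^ ((X + (j : ℕ)) + (k' : ℕ))) • (A j * S k'))
      + (∑ j : Fin P, ∑ j' : Fin P, (lam i * α i ^ ((X + (j : ℕ)) + (X + (j' : ℕ)))) • (A j * B j')) := by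
      intro i
      have piece : ∀ {m n : ℕ} (c : Fin m → F) (d : Fin n → F)
          (C : Fin m → Matrix (Fin t) (Fin s) F) (D : Fin n → Matrix (Fin s) (Fin r) F),
          (∑ a, c a • C a) * (∑ b, d b • D b) =
            ∑ a, ∑ b, (c a * d b) • (C a * D b) := by
        intro m n c d C D
        rw [Matrix.sum_mul]
        refine Finset.sum_congr rfl fun a _ => ?_
        rw [Matrix.smul_mul, Matrix.mul_sum, Finset.smul_sum]
        refine Finset.sum_congr rfl fun b _ => ?_
        rw [Matrix.mul_smul, smul_smul]
      rw [Matrix.add_mul, Matrix.mul_add, Matrix.mul_add, piece, piece, piece, piece]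
      simp only [smul_add, Finset.smul_sum, smul_smul, pow_add]
      abel
    simp only [expand]
    rw [Finset.sum_add_distrib, Finset.sum_add_distrib, Finset.sum_add_distrib]
    have hz : ∀ {m n : ℕ} (C : Fin m → Matrix (Fin t) (Fin s) F)
        (D : Fin n → Matrix (Fin s) (Fin r) F) (e : Fin m → Fin n → ℕ),
        (∀ a b, e a b ≤ P + 2 * X - 2) →
        (∑ i : Fin N, ∑ a : Fin m, ∑ b : Fin n,
          (lam i * α i ^ (e a b)) • (C a * D b)) = 0 := by
      intro m n C D e he
      rw [Finset.sum_comm]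
      apply Finset.sum_eq_zero
      intro a _
      rw [Finset.sum_comm]
      apply Finset.sum_eq_zero
      intro b _
      rw [← Finset.sum_smul, horth _ (he a b), zero_smul]
    rw [hz R S _ (fun a b => by have := a.2; have := b.2; omega),
        hz R B _ (fun a b => by have := a.2; have := b.2; omega),
        hz A S _ (fun a b => by have := a.2; have := b.2; omega)]
    simp only [zero_add]
    rw [Finset.sum_comm]
    refine Finset.sum_congr rfl fun j _ => ?_
    rw [Finset.sum_comm]
    refine Finset.sum_congr rfl fun j' _ => ?_
    simp only [show X + (j : ℕ) + (X + (j' : ℕ)) = 2 * X + (j : ℕ) + (j' : ℕ) from by omega]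
    rw [← Finset.sum_smul]
  · rw [Matrix.isUnit_iff_isUnit_det]
    set M : Matrix (Fin P) (Fin P) F := Matrix.of fun j j' : Fin P =>
      ∑ i, lam i * α i ^ (2 * X + (j : ℕ) + (j' : ℕ)) with hM
    have hperm := Matrix.det_permute (Fin.revPerm) M
    have htri : (M.submatrix (⇑(Fin.revPerm : Equiv.Perm (Fin P))) id).BlockTriangular id := by
      intro j j' h
      simp only [id_eq] at h
      simp only [Matrix.submatrix_apply, Fin.revPerm_apply, id_eq, hM, Matrix.of_apply]
      have hj : (Fin.rev j : ℕ) = P - (j + 1) := Fin.val_rev j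
      have hjlt : (j : ℕ) < P := j.2
      exact horth _ (by omega)
    have hdiag : ∀ j : Fin P, (M.submatrix (⇑(Fin.revPerm : Equiv.Perm (Fin P))) id) j j =
        ∑ i, lam i * α i ^ (P + 2 * X - 1) := by
      intro j
      simp only [Matrix.submatrix_apply, Fin.revPerm_apply, id_eq, hM, Matrix.of_apply]
      have hj : (Fin.rev j : ℕ) = P - (j + 1) := Fin.val_rev j
      have hjlt : (j : ℕ) < P := j.2
      have he : 2 * X + (Fin.rev j : ℕ) + (j : ℕ) = P + 2 * X - 1 := by
        rw [hj]; omega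
      rw [he]
    have hdet : (M.submatrix (⇑(Fin.revPerm : Equiv.Perm (Fin P))) id).det =
        (∑ i, lam i * α i ^ (P + 2 * X - 1)) ^ P := by
      rw [Matrix.det_of_upperTriangular htri,
        Finset.prod_congr rfl (fun j _ => hdiag j), Finset.prod_const,
        Finset.card_univ, Fintype.card_fin]
    have : IsUnit ((↑(Equiv.Perm.sign (Fin.revPerm : Equiv.Perm (Fin P))) : F) * M.det) := by
      rw [← hperm, hdet]
      exact (isUnit_iff_ne_zero.2 hne).pow P
    exact (isUnit_of_mul_isUnit_right this)
end
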